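/- arXiv:1209.2581 — 5 statements merged into one kernel-verified Lean document; each statement's English description precedes it below -/
import Mathlib

section
/- For 0 ≤ i,j ≤ d, the refined l-Eulerian numbers satisfy the symmetry A(d+1, i, d+1-j, l) = A(d+1, d-i, j+1, l). -/
/-- The set `S_n^l` of permutations of `Fin n` whose first `l` values
(1-indexed positions `1,…,l`) are strictly decreasing. -/
def SdSet (n l : ℕ) : Set (Equiv.Perm (Fin n)) :=
  {σ | ∀ s t : Fin n, s < t → (t : ℕ) < l → σ t < σ s}

/-- `pv n σ m` is the 1-indexed value `σ(m+1)` of the permutation at the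
0-indexed position `m` (and `0` if `m` is out of range). -/
def pv (n : ℕ) (σ : Equiv.Perm (Fin n)) (m : ℕ) : ℕ :=
  if h : m < n then (σ ⟨m, h⟩ : ℕ) + 1 else 0

/-- The `l`-descent set of `σ`, in 0-indexed positions: `m` (0-indexed,
corresponding to the 1-indexed position `m+1 ∈ [n-1]`) is an `l`-descent if
either `m+1 ∈ [l]` and `σ(m+1) > σ(l+1)`, or `m+1 ∈ [n-1]∖[l]` and
`σ(m+1) > σ(m+2)`. -/
def lDesc (n l : ℕ) (σ : Equiv.Perm (Fin n)) : Finset ℕ :=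
  (Finset.range (n - 1)).filter fun m =>
    (m < l ∧ pv n σ l < pv n σ m) ∨ (l ≤ m ∧ pv n σ (m + 1) < pv n σ m)

/-- `Acard n i k l` is the number of permutations `σ ∈ S_n^l` with exactly `i`
`l`-descents and last (1-indexed) value `σ(n) = k`. -/
noncomputable def Acard (n i k l : ℕ) : ℕ :=
  Nat.card {σ : Equiv.Perm (Fin n) //
    σ ∈ SdSet n l ∧ (lDesc n l σ).card = i ∧ pv n σ (n - 1) = k}

def sFun (n l : ℕ) : Fin n → Fin n := fun i =>
  if h : (i : ℕ) < l ∧ l ≤ n then ⟨l - 1 - (i : ℕ), by omega⟩ else i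

lemma sFun_invol (n l : ℕ) : Function.Involutive (sFun n l) := by
  intro i
  unfold sFun
  by_cases h : (i : ℕ) < l ∧ l ≤ n
  · rw [dif_pos h]
    have h2 : (l - 1 - (i : ℕ)) < l ∧ l ≤ n := ⟨by omega, h.2⟩
    rw [dif_pos h2]
    ext; simp; omega
  · rw [dif_neg h, dif_neg h]

lemma sFun_lt (n l m : ℕ) (hm : m < n) (h1 : m < l) (h2 : l ≤ n) :
    sFun n l ⟨m, hm⟩ = ⟨l - 1 - m, by omega⟩ := by
  unfold sFun; rw [dif_pos ⟨h1, h2⟩]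

lemma sFun_ge (n l m : ℕ) (hm : m < n) (h1 : l ≤ m) :
    sFun n l ⟨m, hm⟩ = ⟨m, hm⟩ := by
  unfold sFun; rw [dif_neg]; simp; omega

def Phi (n l : ℕ) (σ : Equiv.Perm (Fin n)) : Equiv.Perm (Fin n) :=
  (((sFun_invol n l).toPerm).trans σ).trans Fin.revPerm

lemma Phi_apply (n l : ℕ) (σ : Equiv.Perm (Fin n)) (x : Fin n) :
    Phi n l σ x = Fin.rev (σ (sFun n l x)) := rfl

lemma Phi_invol (n l : ℕ) (σ : Equiv.Perm (Fin n)) : Phi n l (Phi n l σ) = σ := by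
  ext x
  simp [Phi_apply, sFun_invol n l x, Fin.rev_rev]

lemma pv_eq (n : ℕ) (σ : Equiv.Perm (Fin n)) (m : ℕ) (h : m < n) :
    pv n σ m = (σ ⟨m, h⟩ : ℕ) + 1 := dif_pos h

lemma pv_Phi (n l : ℕ) (σ : Equiv.Perm (Fin n)) (m : ℕ) (h : m < n) :
    pv n (Phi n l σ) m = n - (σ (sFun n l ⟨m, h⟩) : ℕ) := by
  rw [pv_eq n _ m h, Phi_apply, Fin.val_rev]
  have := (σ (sFun n l ⟨m, h⟩)).isLt
  omega

theorem key (d l : ℕ) (hld : l ≤ d) (σ : Equiv.Perm (Fin (d+1)))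
    (m : ℕ) (hm : m < d) :
    ((if m < l then l - 1 - m else m) ∈ lDesc (d+1) l (Phi (d+1) l σ)) ↔
      m ∉ lDesc (d+1) l σ := by
  have hln : l ≤ d + 1 := by omega
  have hinj : ∀ a b : Fin (d+1), σ a = σ b → a = b := fun a b h => σ.injective h
  by_cases hml : m < l
  · rw [if_pos hml]
    have h1 : l - 1 - m < d + 1 := by omega
    have h2 : m < d + 1 := by omega
    have h3 : l < d + 1 := by omega
    have hne : σ ⟨l - 1 - m, h1⟩ ≠ σ ⟨l, h3⟩ := by
      intro h; have := hinj _ _ h; simp [Fin.ext_iff] at this; omega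
    simp only [lDesc, Finset.mem_filter, Finset.mem_range]
    rw [pv_Phi _ l σ l h3, pv_Phi _ l σ (l-1-m) h1,
        sFun_ge _ l l h3 le_rfl, sFun_lt _ l (l-1-m) h1 (by omega) hln,
        pv_eq _ σ l h3, pv_eq _ σ m h2]
    have e1 : (⟨l - 1 - (l - 1 - m), by omega⟩ : Fin (d+1)) = ⟨m, h2⟩ := by
      ext; simp; omega
    rw [e1]
    have v1 := (σ ⟨l, h3⟩).isLt
    have v2 := (σ ⟨m, h2⟩).isLt
    have hne2 : σ ⟨m, h2⟩ ≠ σ ⟨l, h3⟩ := by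
      intro h; have := hinj _ _ h; simp [Fin.ext_iff] at this; omega
    rw [Fin.ne_iff_vne] at hne hne2
    constructor
    · rintro ⟨-, h | h⟩
      · intro hc
        rcases hc.2 with ⟨-, hc2⟩ | ⟨hc1, -⟩
        · omega
        · omega
      · omega
    · intro h
      refine ⟨by omega, Or.inl ⟨by omega, ?_⟩⟩
      by_contra hc
      apply h
      refine ⟨by omega, Or.inl ⟨hml, ?_⟩⟩
      -- σ⟨l-1-m⟩ value in Phi-statement... need σ⟨l⟩ < σ⟨m⟩
      omega
  · rw [if_neg hml]
    have h2 : m < d + 1 := by omega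
    have h2' : m + 1 < d + 1 := by omega
    have hne : σ ⟨m, h2⟩ ≠ σ ⟨m+1, h2'⟩ := by
      intro h; have := hinj _ _ h; simp [Fin.ext_iff] at this
    simp only [lDesc, Finset.mem_filter, Finset.mem_range]
    rw [pv_Phi _ l σ m h2, pv_Phi _ l σ (m+1) h2',
        sFun_ge _ l m h2 (by omega), sFun_ge _ l (m+1) h2' (by omega),
        pv_eq _ σ m h2, pv_eq _ σ (m+1) h2']
    have v1 := (σ ⟨m, h2⟩).isLt
    have v2 := (σ ⟨m+1, h2'⟩).isLt
    rw [Fin.ne_iff_vne] at hne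
    constructor
    · rintro ⟨-, h | h⟩
      · omega
      · intro hc
        rcases hc.2 with ⟨hc1, -⟩ | ⟨-, hc2⟩
        · omega
        · omega
    · intro h
      refine ⟨by omega, Or.inr ⟨by omega, ?_⟩⟩
      by_contra hc
      apply h
      refine ⟨by omega, Or.inr ⟨by omega, ?_⟩⟩
      omega

lemma Phi_mem_SdSet (d l : ℕ) (hld : l ≤ d) (σ : Equiv.Perm (Fin (d+1)))
    (hσ : σ ∈ SdSet (d+1) l) : Phi (d+1) l σ ∈ SdSet (d+1) l := by
  intro s t hst htl
  have hsl : (s : ℕ) < l := lt_trans (by exact_mod_cast hst) htl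
  rw [Phi_apply, Phi_apply]
  have es : sFun (d+1) l s = ⟨l - 1 - s, by omega⟩ := by
    rw [← sFun_lt (d+1) l s s.isLt hsl (by omega)]
  have et : sFun (d+1) l t = ⟨l - 1 - t, by omega⟩ := by
    rw [← sFun_lt (d+1) l t t.isLt htl (by omega)]
  rw [es, et, Fin.rev_lt_rev]
  apply hσ
  · rw [Fin.lt_iff_val_lt_val]; simp; omega
  · simp; omega

lemma card_lDesc_Phi (d l : ℕ) (hld : l ≤ d) (σ : Equiv.Perm (Fin (d+1))) :
    (lDesc (d+1) l (Phi (d+1) l σ)).card = d - (lDesc (d+1) l σ).card := by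
  have hsub : lDesc (d+1) l σ ⊆ Finset.range d := by
    intro m hm
    simp only [lDesc, Finset.mem_filter, Finset.mem_range] at hm ⊢
    omega
  have hsub2 : lDesc (d+1) l (Phi (d+1) l σ) ⊆ Finset.range d := by
    intro m hm
    simp only [lDesc, Finset.mem_filter, Finset.mem_range] at hm ⊢
    omega
  have hcard : (lDesc (d+1) l (Phi (d+1) l σ)).card
      = (Finset.range d \ lDesc (d+1) l σ).card := by
    apply Finset.card_bij' (i := fun m _ => if m < l then l - 1 - m else m)
      (j := fun m _ => if m < l then l - 1 - m else m)
    · intro a ha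
      have had : a < d := Finset.mem_range.mp (hsub2 ha)
      rw [Finset.mem_sdiff, Finset.mem_range]
      have hfa : (if a < l then l - 1 - a else a) < d := by split <;> omega
      constructor
      · exact hfa
      · rw [← key d l hld σ _ hfa]
        have : (if (if a < l then l - 1 - a else a) < l
            then l - 1 - (if a < l then l - 1 - a else a)
            else (if a < l then l - 1 - a else a)) = a := by
          split_ifs <;> omega
        rw [this]; exact ha
    · intro a ha
      rw [Finset.mem_sdiff, Finset.mem_range] at ha
      exact (key d l hld σ a ha.1).mpr ha.2
    · intro a ha
      have had : a < d := Finset.mem_range.mp (hsub2 ha)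
      split_ifs <;> omega
    · intro a ha
      rw [Finset.mem_sdiff, Finset.mem_range] at ha
      split_ifs <;> omega
  rw [hcard, Finset.card_sdiff_of_subset hsub, Finset.card_range]

lemma pv_Phi_last (d l : ℕ) (hld : l ≤ d) (σ : Equiv.Perm (Fin (d+1))) :
    pv (d+1) (Phi (d+1) l σ) d = d + 2 - pv (d+1) σ d := by
  rw [pv_Phi (d+1) l σ d (by omega), sFun_ge (d+1) l d (by omega) hld,
      pv_eq (d+1) σ d (by omega)]
  have := (σ ⟨d, by omega⟩).isLt
  omega

/-- The symmetry `A(d+1, i, d+1-j, l) = A(d+1, d-i, j+1, l)` for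
`0 ≤ i, j ≤ d`. -/
theorem Acard_symmetry (d l i j : ℕ) (hl : 1 ≤ l) (hld : l ≤ d)
    (hi : i ≤ d) (hj : j ≤ d) :
    Acard (d + 1) i (d + 1 - j) l = Acard (d + 1) (d - i) (j + 1) l := by
  apply Nat.card_congr
  refine
    { toFun := fun σ => ⟨Phi (d+1) l σ.1, Phi_mem_SdSet d l hld σ.1 σ.2.1, ?_, ?_⟩
      invFun := fun σ => ⟨Phi (d+1) l σ.1, Phi_mem_SdSet d l hld σ.1 σ.2.1, ?_, ?_⟩
      left_inv := fun σ => Subtype.ext (Phi_invol (d+1) l σ.1)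
      right_inv := fun σ => Subtype.ext (Phi_invol (d+1) l σ.1) }
  · rw [card_lDesc_Phi d l hld, σ.2.2.1]
  · have h3 : pv (d+1) σ.1 d = d + 1 - j := σ.2.2.2
    show pv (d+1) (Phi (d+1) l σ.1) d = j + 1
    rw [pv_Phi_last d l hld, h3]
    omega
  · rw [card_lDesc_Phi d l hld, σ.2.2.1]
    omega
  · have h3 : pv (d+1) σ.1 d = j + 1 := σ.2.2.2
    show pv (d+1) (Phi (d+1) l σ.1) d = d + 1 - j
    rw [pv_Phi_last d l hld, h3]
    omega
end

section
/- The sum over all 0 ≤ i,j ≤ d of the entries A(d+1, i, d+1-j, l) equals (d+1)!/l!. -/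
open Finset Equiv

/-- The tail embedding of a permutation. -/
def tailEmb {n l : ℕ} (hl : l ≤ n) (σ : Perm (Fin n)) : Fin (n - l) ↪ Fin n :=
  ⟨fun i => σ ⟨l + i, by omega⟩, by
    intro a b hab
    have h2 : l + (a : ℕ) = l + (b : ℕ) := by
      have := σ.injective hab
      simpa [Fin.ext_iff] using this
    exact Fin.ext (by omega)⟩

lemma compl_card {n l : ℕ} (hl : l ≤ n) (f : Fin (n - l) ↪ Fin n) :
    ((Finset.univ.map f)ᶜ : Finset (Fin n)).card = l := by
  rw [Finset.card_compl, Finset.card_map, Finset.card_univ, Fintype.card_fin,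
    Fintype.card_fin]
  omega

/-- The inverse map: fill positions `< l` with the complement in decreasing order. -/
noncomputable def fillFun {n l : ℕ} (hl : l ≤ n) (f : Fin (n - l) ↪ Fin n) :
    Fin n → Fin n := fun i =>
  if h : (i : ℕ) < l then
    ((Finset.univ.map f)ᶜ).orderEmbOfFin (compl_card hl f) ⟨l - 1 - i, by omega⟩
  else f ⟨(i : ℕ) - l, by omega⟩

lemma fillFun_inj {n l : ℕ} (hl : l ≤ n) (f : Fin (n - l) ↪ Fin n) :
    Function.Injective (fillFun hl f) := by
  intro a b hab
  unfold fillFun at hab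
  by_cases ha : (a : ℕ) < l <;> by_cases hb : (b : ℕ) < l <;>
    simp [ha, hb] at hab
  · exact Fin.ext (by omega)
  · exfalso
    have h1 := Finset.orderEmbOfFin_mem _ (compl_card hl f) ⟨l - 1 - a, by omega⟩
    rw [hab] at h1
    simp [Finset.mem_compl] at h1
  · exfalso
    have h1 := Finset.orderEmbOfFin_mem _ (compl_card hl f) ⟨l - 1 - b, by omega⟩
    rw [← hab] at h1
    simp [Finset.mem_compl] at h1
  · exact Fin.ext (by omega)

/-- Key cardinality: `|S_n^l| = n!/l!`. -/
lemma card_SdSet {n l : ℕ} (hl : l ≤ n) :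
    Nat.card {σ : Perm (Fin n) // σ ∈ SdSet n l} = Nat.factorial n / Nat.factorial l := by
  classical
  have e : {σ : Perm (Fin n) // σ ∈ SdSet n l} ≃ (Fin (n - l) ↪ Fin n) := by
    refine ⟨fun σ => tailEmb hl σ.1, fun f =>
      ⟨Equiv.ofBijective (fillFun hl f)
        ((Finite.injective_iff_bijective).mp (fillFun_inj hl f)), ?_⟩, ?_, ?_⟩
    · intro s t hst htl
      show fillFun hl f t < fillFun hl f s
      have hsl : (s : ℕ) < l := lt_of_le_of_lt (le_of_lt hst) htl
      unfold fillFun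
      rw [dif_pos htl, dif_pos hsl]
      exact (Finset.orderEmbOfFin _ (compl_card hl f)).strictMono
        (show (⟨l - 1 - t, by omega⟩ : Fin l) < ⟨l - 1 - s, by omega⟩ by
          simp [Fin.lt_def]; omega)
    · rintro ⟨σ, hσ⟩
      refine Subtype.ext (Equiv.ext fun i => ?_)
      show fillFun hl (tailEmb hl σ) i = σ i
      unfold fillFun
      by_cases hi : (i : ℕ) < l
      · rw [dif_pos hi]
        have huniq := Finset.orderEmbOfFin_unique
          (compl_card hl (tailEmb hl σ))
          (f := fun k : Fin l => σ ⟨l - 1 - k, by omega⟩) ?_ ?_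
        · have := congrFun huniq.symm ⟨l - 1 - i, by omega⟩
          rw [this]
          congr 1
          exact Fin.ext (by simp; omega)
        · intro k
          simp only [Finset.mem_compl, Finset.mem_map, Finset.mem_univ, true_and]
          rintro ⟨j, hj⟩
          have : l + (j : ℕ) = l - 1 - (k : ℕ) := by
            have := σ.injective hj
            simpa [Fin.ext_iff] using this
          omega
        · intro a b hab
          exact hσ ⟨l - 1 - b, by omega⟩ ⟨l - 1 - a, by omega⟩
            (by simp [Fin.lt_def]; omega) (by simp; omega)
      · rw [dif_neg hi]
        show σ _ = σ i
        congr 1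
        exact Fin.ext (by simp; omega)
    · intro f
      refine Function.Embedding.ext fun i => ?_
      show fillFun hl f ⟨l + i, by omega⟩ = f i
      unfold fillFun
      rw [dif_neg (by simp)]
      congr 1
      exact Fin.ext (by simp)
  rw [Nat.card_congr e, Nat.card_eq_fintype_card, Fintype.card_embedding_eq,
    Fintype.card_fin, Fintype.card_fin, Nat.descFactorial_eq_div (by omega)]
  have h2 : n - (n - l) = l := by omega
  rw [h2]

/-- The sum of all entries `A(d+1, i, d+1-j, l)`, `0 ≤ i, j ≤ d`, of the
`h`-vector transformation matrix equals `(d+1)!/l!`. -/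
theorem Acard_total_sum (d l : ℕ) (hl : 1 ≤ l) (hld : l ≤ d) :
    ∑ i ∈ Finset.range (d + 1), ∑ j ∈ Finset.range (d + 1),
        Acard (d + 1) i (d + 1 - j) l =
      Nat.factorial (d + 1) / Nat.factorial l := by
  classical
  set n := d + 1 with hn
  have hpv : ∀ σ : Perm (Fin n), 1 ≤ pv n σ (n - 1) ∧ pv n σ (n - 1) ≤ n := by
    intro σ
    have hd : n - 1 < n := by omega
    rw [pv, dif_pos hd]
    have := (σ ⟨n - 1, hd⟩).isLt
    omega
  have key : ∀ i k, Acard n i k l =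
      (Finset.univ.filter (fun σ : Perm (Fin n) =>
        σ ∈ SdSet n l ∧ (lDesc n l σ).card = i ∧ pv n σ (n - 1) = k)).card := by
    intro i k
    rw [Acard, Nat.card_eq_fintype_card, Fintype.card_subtype]
  have main : ∑ i ∈ Finset.range (d + 1), ∑ j ∈ Finset.range (d + 1),
      Acard n i (n - j) l = (Finset.univ.filter (· ∈ SdSet n l)).card := by
    rw [Finset.card_eq_sum_card_fiberwise
      (f := fun σ => ((lDesc n l σ).card, n - pv n σ (n - 1)))
      (t := Finset.range (d + 1) ×ˢ Finset.range (d + 1)) ?_]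
    · rw [Finset.sum_product]
      refine Finset.sum_congr rfl fun i hi => Finset.sum_congr rfl fun j hj => ?_
      rw [key]
      congr 1
      ext σ
      simp only [Finset.mem_filter, Finset.mem_univ, true_and, Prod.mk.injEq]
      have := hpv σ
      rw [Finset.mem_range] at hj
      constructor
      · rintro ⟨h1, h2, h3⟩
        exact ⟨h1, h2, by omega⟩
      · rintro ⟨h1, h2, h3⟩
        exact ⟨h1, h2, by omega⟩
    · intro σ hσ
      rw [Finset.mem_coe, Finset.mem_product, Finset.mem_range, Finset.mem_range]
      have h1 : (lDesc n l σ).card ≤ d := by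
        have : (lDesc n l σ).card ≤ (Finset.range (n - 1)).card :=
          Finset.card_le_card (Finset.filter_subset _ _)
        simpa [hn] using this
      have := hpv σ
      refine ⟨?_, ?_⟩ <;> dsimp only <;> omega
  calc ∑ i ∈ Finset.range (d + 1), ∑ j ∈ Finset.range (d + 1),
        Acard (d + 1) i (d + 1 - j) l
      = (Finset.univ.filter (· ∈ SdSet n l)).card := main
    _ = Nat.card {σ : Perm (Fin n) // σ ∈ SdSet n l} := by
        rw [Nat.card_eq_fintype_card, Fintype.card_subtype]
    _ = Nat.factorial n / Nat.factorial l := card_SdSet (by omega)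
end

section
/- For l = d-1, the entries of the (d+1)×(d+1) matrix with (i,j)-entry A(d+1, i, d+1-j, d-1) (0 ≤ i,j ≤ d) are: 0 if (i=0 and j≠0) or (i=d and j≠d); 2 if i = j with 1 ≤ i ≤ d-1; and 1 otherwise. -/
section Aux

variable {d : ℕ}

/-- The complement of the two last values. -/
def cset (a k : Fin (d + 1)) : Finset (Fin (d + 1)) := {a, k}ᶜ

lemma cset_card (a k : Fin (d + 1)) (h : a ≠ k) : (cset a k).card = d - 1 := by
  rw [cset, Finset.card_compl, Finset.card_insert_of_notMem (by simp [h]),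
    Finset.card_singleton]
  simp

lemma mem_cset_iff {a k v : Fin (d + 1)} : v ∈ cset a k ↔ v ≠ a ∧ v ≠ k := by
  simp [cset, not_or]

/-- The permutation with last two values `a, k` and the rest decreasing, as a function. -/
def F (hd : 2 ≤ d) (a k : Fin (d + 1)) (h : a ≠ k) : Fin (d + 1) → Fin (d + 1) := fun m =>
  if (m : ℕ) = d then k
  else if (m : ℕ) = d - 1 then a
  else (cset a k).orderEmbOfFin (cset_card a k h)
    ⟨d - 2 - (m : ℕ), by omega⟩

lemma F_inj (hd : 2 ≤ d) (a k : Fin (d + 1)) (h : a ≠ k) :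
    Function.Injective (F hd a k h) := by
  intro m₁ m₂ he
  have hm1 := m₁.isLt
  have hm2 := m₂.isLt
  have hmem : ∀ t : Fin (d - 1),
      (cset a k).orderEmbOfFin (cset_card a k h) t ≠ a ∧
      (cset a k).orderEmbOfFin (cset_card a k h) t ≠ k := fun t =>
    mem_cset_iff.1 (Finset.orderEmbOfFin_mem _ _ t)
  simp only [F] at he
  split_ifs at he with h1 h2 h3 h4 h5 h6 h7 h8 h9 <;>
    first
      | (exact Fin.ext (by omega))
      | (exact absurd he.symm h)
      | (exact absurd he h)
      | (exact absurd he.symm (hmem _).2)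
      | (exact absurd he (hmem _).2)
      | (exact absurd he.symm (hmem _).1)
      | (exact absurd he (hmem _).1)
      | (have := ((cset a k).orderEmbOfFin (cset_card a k h)).injective he
         rw [Fin.mk.injEq] at this
         exact Fin.ext (by omega))

/-- The permutation with last two values `a, k` and the rest decreasing. -/
noncomputable def Φ (hd : 2 ≤ d) (a k : Fin (d + 1)) (h : a ≠ k) :
    Equiv.Perm (Fin (d + 1)) :=
  Equiv.ofBijective _ (Finite.injective_iff_bijective.mp (F_inj hd a k h))

lemma Φ_apply (hd : 2 ≤ d) (a k : Fin (d + 1)) (h : a ≠ k) (m : Fin (d + 1)) :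
    Φ hd a k h m = F hd a k h m := rfl

lemma pv_Φ (hd : 2 ≤ d) (a k : Fin (d + 1)) (h : a ≠ k) (m : ℕ) (hm : m < d + 1) :
    pv (d + 1) (Φ hd a k h) m = (F hd a k h ⟨m, hm⟩ : ℕ) + 1 := by
  rw [pv, dif_pos hm]; rfl

lemma F_last (hd : 2 ≤ d) (a k : Fin (d + 1)) (h : a ≠ k) :
    F hd a k h ⟨d, by omega⟩ = k := by simp [F]

lemma F_snd (hd : 2 ≤ d) (a k : Fin (d + 1)) (h : a ≠ k) :
    F hd a k h ⟨d - 1, by omega⟩ = a := by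
  simp only [F]
  rw [if_neg (by omega)]
  simp

lemma F_lt (hd : 2 ≤ d) (a k : Fin (d + 1)) (h : a ≠ k) (m : Fin (d + 1))
    (hm : (m : ℕ) < d - 1) :
    F hd a k h m =
      (cset a k).orderEmbOfFin (cset_card a k h) ⟨d - 2 - (m : ℕ), by omega⟩ := by
  simp only [F]
  rw [if_neg (by omega), if_neg (by omega)]

lemma Φ_mem (hd : 2 ≤ d) (a k : Fin (d + 1)) (h : a ≠ k) :
    Φ hd a k h ∈ SdSet (d + 1) (d - 1) := by
  intro s t hst ht
  have hs : (s : ℕ) < d - 1 := lt_trans hst ht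
  rw [Φ_apply, Φ_apply]
  rw [F_lt hd a k h s hs, F_lt hd a k h t ht]
  exact ((cset a k).orderEmbOfFin (cset_card a k h)).strictMono
    (by rw [Fin.mk_lt_mk]; have := Fin.lt_def.1 hst; omega)

lemma lDesc_Φ_card (hd : 2 ≤ d) (a k : Fin (d + 1)) (h : a ≠ k) :
    (lDesc (d + 1) (d - 1) (Φ hd a k h)).card =
      (d - (a : ℕ) - (if a < k then 1 else 0)) + (if k < a then 1 else 0) := by
  classical
  have psnd : pv (d + 1) (Φ hd a k h) (d - 1) = (a : ℕ) + 1 := by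
    rw [pv_Φ hd a k h (d - 1) (by omega), F_snd]
  have plast : pv (d + 1) (Φ hd a k h) d = (k : ℕ) + 1 := by
    rw [pv_Φ hd a k h d (by omega), F_last]
  have embv : ∀ m : ℕ, m < d - 1 → pv (d + 1) (Φ hd a k h) m =
      ((cset a k).orderEmbOfFin (cset_card a k h) ⟨d - 2 - m, by omega⟩ : ℕ) + 1 := by
    intro m hm
    rw [pv_Φ hd a k h m (by omega), F_lt hd a k h ⟨m, by omega⟩ hm]
  have hcond : ∀ m, m < d - 1 →
      (((m < d - 1 ∧ pv (d + 1) (Φ hd a k h) (d - 1) < pv (d + 1) (Φ hd a k h) m) ∨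
        (d - 1 ≤ m ∧ pv (d + 1) (Φ hd a k h) (m + 1) < pv (d + 1) (Φ hd a k h) m)) ↔
        a < (cset a k).orderEmbOfFin (cset_card a k h) ⟨d - 2 - m, by omega⟩) := by
    intro m hm
    rw [psnd, embv m hm, Fin.lt_def]
    constructor
    · rintro (⟨_, hlt⟩ | ⟨hge, _⟩) <;> omega
    · intro hlt; exact Or.inl ⟨hm, by omega⟩
  have hfilter : ((cset a k).filter fun v => a < v).card =
      d - (a : ℕ) - (if a < k then 1 else 0) := by
    have hset : (cset a k).filter (fun v => a < v) = Finset.Ioi a \ {k} := by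
      ext v
      simp only [Finset.mem_filter, mem_cset_iff, Finset.mem_sdiff, Finset.mem_Ioi,
        Finset.mem_singleton]
      constructor
      · rintro ⟨⟨_, hvk⟩, hav⟩; exact ⟨hav, hvk⟩
      · rintro ⟨hav, hvk⟩; exact ⟨⟨ne_of_gt hav, hvk⟩, hav⟩
    have hIoi : (Finset.Ioi a).card = d - (a : ℕ) := by simp
    rw [hset]
    by_cases hak : a < k
    · rw [Finset.card_sdiff_of_subset (by simp [Finset.mem_Ioi, hak]), hIoi, if_pos hak,
        Finset.card_singleton]
    · rw [Finset.sdiff_singleton_eq_erase, Finset.erase_eq_of_notMem (by simp [Finset.mem_Ioi, hak]), hIoi, if_neg hak]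
      omega
  have hScard : ((Finset.range (d - 1)).filter fun m =>
      (m < d - 1 ∧ pv (d + 1) (Φ hd a k h) (d - 1) < pv (d + 1) (Φ hd a k h) m) ∨
        (d - 1 ≤ m ∧ pv (d + 1) (Φ hd a k h) (m + 1) < pv (d + 1) (Φ hd a k h) m)).card =
      ((cset a k).filter fun v => a < v).card := by
    apply Finset.card_bij
      (fun m _ => (cset a k).orderEmbOfFin (cset_card a k h) ⟨d - 2 - m, by omega⟩)
    · intro m hm
      have hm' := Finset.mem_range.1 (Finset.mem_of_mem_filter m hm)
      have hc := (Finset.mem_filter.1 hm).2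
      rw [hcond m hm'] at hc
      exact Finset.mem_filter.2 ⟨Finset.orderEmbOfFin_mem _ _ _, hc⟩
    · intro m₁ h₁ m₂ h₂ he
      have hinj := ((cset a k).orderEmbOfFin (cset_card a k h)).injective he
      rw [Fin.mk.injEq] at hinj
      have := Finset.mem_range.1 (Finset.mem_of_mem_filter _ h₁)
      have := Finset.mem_range.1 (Finset.mem_of_mem_filter _ h₂)
      omega
    · intro v hv
      have hv' := Finset.mem_filter.1 hv
      have hvr : v ∈ Set.range ((cset a k).orderEmbOfFin (cset_card a k h)) := by
        rw [Finset.range_orderEmbOfFin]; exact hv'.1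
      obtain ⟨t, ht⟩ := hvr
      have htlt := t.isLt
      have htrw : (⟨d - 2 - (d - 2 - (t : ℕ)), by omega⟩ : Fin (d - 1)) = t :=
        Fin.ext (by simp; omega)
      refine ⟨d - 2 - (t : ℕ), Finset.mem_filter.2 ⟨Finset.mem_range.2 (by omega), ?_⟩, ?_⟩
      · rw [hcond _ (by omega), htrw, ht]
        exact hv'.2
      · rw [htrw, ht]
  rw [lDesc, show (d + 1 - 1) = (d - 1) + 1 by omega, Finset.range_add_one,
    Finset.filter_insert]
  by_cases hka : k < a
  · rw [if_pos (Or.inr ⟨le_refl _,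
      by rw [show d - 1 + 1 = d by omega, plast, psnd]
         exact Nat.succ_lt_succ (Fin.lt_def.1 hka)⟩)]
    rw [Finset.card_insert_of_notMem
      (fun hmem => by
        have := Finset.mem_range.1 (Finset.mem_of_mem_filter _ hmem); omega)]
    rw [hScard, hfilter, if_pos hka]
  · have hcf : ¬((d - 1 < d - 1 ∧ pv (d + 1) (Φ hd a k h) (d - 1) <
        pv (d + 1) (Φ hd a k h) (d - 1)) ∨
        (d - 1 ≤ d - 1 ∧ pv (d + 1) (Φ hd a k h) (d - 1 + 1) <
          pv (d + 1) (Φ hd a k h) (d - 1))) := by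
      rintro (⟨hlt, _⟩ | ⟨_, hlt⟩)
      · omega
      · rw [show d - 1 + 1 = d by omega, plast, psnd] at hlt
        exact hka (Fin.lt_def.2 (by omega))
    rw [if_neg hcf, hScard, hfilter, if_neg hka]
    exact (Nat.add_zero _).symm

lemma eq_Φ (hd : 2 ≤ d) (a k : Fin (d + 1)) (h : a ≠ k) (σ : Equiv.Perm (Fin (d + 1)))
    (hσ : σ ∈ SdSet (d + 1) (d - 1)) (hk : σ ⟨d, by omega⟩ = k)
    (ha : σ ⟨d - 1, by omega⟩ = a) : σ = Φ hd a k h := by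
  have key : (fun t : Fin (d - 1) => σ ⟨d - 2 - (t : ℕ), by omega⟩) =
      (cset a k).orderEmbOfFin (cset_card a k h) := by
    apply Finset.orderEmbOfFin_unique
    · intro t
      have htlt := t.isLt
      rw [mem_cset_iff]
      constructor
      · intro he
        have := σ.injective (he.trans ha.symm)
        rw [Fin.mk.injEq] at this
        omega
      · intro he
        have := σ.injective (he.trans hk.symm)
        rw [Fin.mk.injEq] at this
        omega
    · intro t t' htt'
      have h1 := t.isLt
      have h2 := t'.isLt
      have h3 := Fin.lt_def.1 htt'
      exact hσ ⟨d - 2 - (t' : ℕ), by omega⟩ ⟨d - 2 - (t : ℕ), by omega⟩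
        (Fin.mk_lt_mk.2 (by omega)) (by simp; omega)
  apply Equiv.ext
  intro m
  rw [Φ_apply]
  have hmlt := m.isLt
  by_cases hm1 : (m : ℕ) = d
  · rw [show m = ⟨d, by omega⟩ from Fin.ext hm1, F_last]
    exact hk
  · by_cases hm2 : (m : ℕ) = d - 1
    · rw [show m = ⟨d - 1, by omega⟩ from Fin.ext hm2, F_snd]
      exact ha
    · have hm : (m : ℕ) < d - 1 := by omega
      rw [F_lt hd a k h m hm, ← congrFun key ⟨d - 2 - (m : ℕ), by omega⟩]
      congr 1
      exact Fin.ext (by simp; omega)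

lemma Acard_eq (hd : 2 ≤ d) (i : ℕ) (k : Fin (d + 1)) :
    Acard (d + 1) i ((k : ℕ) + 1) (d - 1) =
      Nat.card {a : Fin (d + 1) // a ≠ k ∧
        (d - (a : ℕ) - (if a < k then 1 else 0)) + (if k < a then 1 else 0) = i} := by
  rw [Acard]
  apply Nat.card_congr
  have hlast : ∀ σ : Equiv.Perm (Fin (d + 1)),
      pv (d + 1) σ (d + 1 - 1) = (k : ℕ) + 1 ↔ σ ⟨d, by omega⟩ = k := by
    intro σ
    rw [show d + 1 - 1 = d from rfl, pv, dif_pos (by omega : d < d + 1)]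
    constructor
    · intro he; exact Fin.ext (by omega)
    · intro he; rw [he]
  refine Equiv.mk (fun σs => ⟨σs.1 ⟨d - 1, by omega⟩, ?_, ?_⟩)
    (fun as => ⟨Φ hd as.1 k as.2.1, Φ_mem hd as.1 k as.2.1, ?_, ?_⟩) ?_ ?_
  · intro he
    have hkk := (hlast σs.1).1 σs.2.2.2
    have := σs.1.injective (he.trans hkk.symm)
    rw [Fin.mk.injEq] at this
    omega
  · have hkk := (hlast σs.1).1 σs.2.2.2
    have hne : σs.1 ⟨d - 1, by omega⟩ ≠ k := by
      intro he
      have := σs.1.injective (he.trans hkk.symm)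
      rw [Fin.mk.injEq] at this
      omega
    have heq := eq_Φ hd _ k hne σs.1 σs.2.1 hkk rfl
    have hcard := σs.2.2.1
    rw [heq, lDesc_Φ_card] at hcard
    exact hcard
  · rw [lDesc_Φ_card]
    exact as.2.2
  · exact (hlast _).2 (by rw [Φ_apply, F_last])
  · intro σs
    apply Subtype.ext
    have hkk := (hlast σs.1).1 σs.2.2.2
    have hne : σs.1 ⟨d - 1, by omega⟩ ≠ k := by
      intro he
      have := σs.1.injective (he.trans hkk.symm)
      rw [Fin.mk.injEq] at this
      omega
    exact (eq_Φ hd _ k hne σs.1 σs.2.1 hkk rfl).symm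
  · intro as
    apply Subtype.ext
    show F hd as.1 k as.2.1 ⟨d - 1, by omega⟩ = as.1
    exact F_snd hd as.1 k as.2.1

lemma count (hd : 2 ≤ d) (i : ℕ) (k : Fin (d + 1)) :
    Nat.card {a : Fin (d + 1) // a ≠ k ∧
        (d - (a : ℕ) - (if a < k then 1 else 0)) + (if k < a then 1 else 0) = i} =
      (if 1 ≤ i ∧ i ≤ d - (k : ℕ) then 1 else 0) +
        (if d - (k : ℕ) ≤ i ∧ i ≤ d - 1 then 1 else 0) := by
  classical
  rw [Nat.card_eq_fintype_card, Fintype.card_subtype]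
  have hk := k.isLt
  have hpred : ∀ a : Fin (d + 1),
      ((a ≠ k ∧ (d - (a : ℕ) - (if a < k then 1 else 0)) + (if k < a then 1 else 0) = i) ↔
      (((k : ℕ) < (a : ℕ) ∧ i = d + 1 - (a : ℕ)) ∨
        ((a : ℕ) < (k : ℕ) ∧ i = d - 1 - (a : ℕ)))) := by
    intro a
    have ha := a.isLt
    simp only [Ne, Fin.ext_iff, Fin.lt_def]
    split_ifs <;> omega
  by_cases c1 : 1 ≤ i ∧ i ≤ d - (k : ℕ) <;> by_cases c2 : d - (k : ℕ) ≤ i ∧ i ≤ d - 1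
  · rw [if_pos c1, if_pos c2]
    have hs : (Finset.univ.filter fun a : Fin (d + 1) => a ≠ k ∧
        (d - (a : ℕ) - (if a < k then 1 else 0)) + (if k < a then 1 else 0) = i) =
        {⟨d + 1 - i, by omega⟩, ⟨d - 1 - i, by omega⟩} := by
      ext a
      have ha := a.isLt
      simp only [Finset.mem_filter, Finset.mem_univ, true_and, hpred a,
        Finset.mem_insert, Finset.mem_singleton, Fin.ext_iff]
      omega
    have hnotmem : (⟨d + 1 - i, by omega⟩ : Fin (d + 1)) ∉
        ({⟨d - 1 - i, by omega⟩} : Finset (Fin (d + 1))) := by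
      simp only [Finset.mem_singleton, Fin.ext_iff]
      omega
    rw [hs, Finset.card_insert_of_notMem hnotmem, Finset.card_singleton]
  · rw [if_pos c1, if_neg c2]
    have hs : (Finset.univ.filter fun a : Fin (d + 1) => a ≠ k ∧
        (d - (a : ℕ) - (if a < k then 1 else 0)) + (if k < a then 1 else 0) = i) =
        {⟨d + 1 - i, by omega⟩} := by
      ext a
      have ha := a.isLt
      simp only [Finset.mem_filter, Finset.mem_univ, true_and, hpred a,
        Finset.mem_singleton, Fin.ext_iff]
      omega
    rw [hs, Finset.card_singleton]
  · rw [if_neg c1, if_pos c2]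
    have hs : (Finset.univ.filter fun a : Fin (d + 1) => a ≠ k ∧
        (d - (a : ℕ) - (if a < k then 1 else 0)) + (if k < a then 1 else 0) = i) =
        {⟨d - 1 - i, by omega⟩} := by
      ext a
      have ha := a.isLt
      simp only [Finset.mem_filter, Finset.mem_univ, true_and, hpred a,
        Finset.mem_singleton, Fin.ext_iff]
      omega
    rw [hs, Finset.card_singleton]
  · rw [if_neg c1, if_neg c2]
    have hs : (Finset.univ.filter fun a : Fin (d + 1) => a ≠ k ∧
        (d - (a : ℕ) - (if a < k then 1 else 0)) + (if k < a then 1 else 0) = i) =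
        ∅ := by
      apply Finset.filter_eq_empty_iff.mpr
      intro a _
      rw [hpred a]
      have ha := a.isLt
      omega
    rw [hs, Finset.card_empty]

end Aux

/-- For `l = d-1`, the entries `A(d+1, i, d+1-j, d-1)` of the `h`-vector
transformation matrix are `0` if (`i = 0` and `j ≠ 0`) or (`i = d` and
`j ≠ d`), `2` if `i = j` with `1 ≤ i ≤ d-1`, and `1` otherwise. -/
theorem Acard_top_level (d i j : ℕ) (hd : 2 ≤ d) (hi : i ≤ d) (hj : j ≤ d) :
    Acard (d + 1) i (d + 1 - j) (d - 1) =
      if (i = 0 ∧ j ≠ 0) ∨ (i = d ∧ j ≠ d) then 0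
      else if i = j ∧ 1 ≤ i ∧ i ≤ d - 1 then 2
      else 1 := by
  set k : Fin (d + 1) := ⟨d - j, by omega⟩ with hkdef
  have hkv : (k : ℕ) = d - j := rfl
  rw [show d + 1 - j = (k : ℕ) + 1 by rw [hkv]; omega]
  rw [Acard_eq hd i k, count hd i k, hkv]
  have hdj : d - (d - j) = j := by omega
  rw [hdj]
  split_ifs <;> omega
end

section
/- For a (d-1)-dimensional simplicial complex Δ and 1 ≤ l ≤ d-1, the Stanley-Reisner ideal of sd^l(Δ) is generated by squarefree monomials of degree at most l+1. -/
/-- A subset `S` of the vertex set `V ⊕ Finset V` of the `l`-th partial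
barycentric subdivision of `Δ` (original vertices together with barycenters of
faces) is a face iff its original-vertex part `A₀` is a face of `Δ` of
cardinality `≤ l` and its barycenter part is a chain of faces of `Δ` of
cardinality `≥ l+1`, each containing `A₀`. -/
def IsChainFace {V : Type*} [DecidableEq V] (Δ : Finset (Finset V)) (l : ℕ)
    (S : Finset (V ⊕ Finset V)) : Prop :=
  S.toLeft ∈ Δ ∧ S.toLeft.card ≤ l ∧
  (∀ B ∈ S.toRight, B ∈ Δ ∧ l + 1 ≤ B.card ∧ S.toLeft ⊆ B) ∧
  (∀ B ∈ S.toRight, ∀ B' ∈ S.toRight, B ⊆ B' ∨ B' ⊆ B)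

lemma exists_small_nonface {V : Type*} [DecidableEq V] (Δ : Finset (Finset V)) (l : ℕ)
    (hl : 1 ≤ l) (N : Finset (V ⊕ Finset V))
    (hsing : ∀ w ∈ N, IsChainFace Δ l {w}) (hN : ¬ IsChainFace Δ l N) :
    ∃ N' ⊆ N, N'.card ≤ l + 1 ∧ ¬ IsChainFace Δ l N' := by
  -- facts from singletons
  have hsl : ∀ v, Sum.inl v ∈ N → {v} ∈ Δ := by
    intro v hv
    have := (hsing _ hv).1
    have h' : ({Sum.inl v} : Finset (V ⊕ Finset V)).toLeft = {v} := by
      ext a; simp [Finset.mem_toLeft]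
    rw [h'] at this
    exact this
  have hsr : ∀ B, Sum.inr B ∈ N → B ∈ Δ ∧ l + 1 ≤ B.card ∧ (∅ : Finset V) ∈ Δ := by
    intro B hB
    obtain ⟨h1, _, h3, _⟩ := hsing _ hB
    have hBmem : B ∈ ({Sum.inr B} : Finset (V ⊕ Finset V)).toRight := by
      simp [Finset.mem_toRight]
    have h1' : ({Sum.inr B} : Finset (V ⊕ Finset V)).toLeft = ∅ := by
      ext a; simp [Finset.mem_toLeft]
    obtain ⟨hB1, hB2, _⟩ := h3 B hBmem
    rw [h1'] at h1
    exact ⟨hB1, hB2, h1⟩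
  by_cases hcard : N.toLeft.card ≤ l
  · by_cases hface : N.toLeft ∈ Δ
    · by_cases h3 : ∀ B ∈ N.toRight, N.toLeft ⊆ B
      · -- chain condition must fail
        have h3' : ∀ B ∈ N.toRight, B ∈ Δ ∧ l + 1 ≤ B.card ∧ N.toLeft ⊆ B := by
          intro B hB
          have hB' : Sum.inr B ∈ N := (Finset.mem_toRight).1 hB
          exact ⟨(hsr B hB').1, (hsr B hB').2.1, h3 B hB⟩
        have h4 : ¬ ∀ B ∈ N.toRight, ∀ B' ∈ N.toRight, B ⊆ B' ∨ B' ⊆ B := by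
          intro h4
          exact hN ⟨hface, hcard, h3', h4⟩
        push_neg at h4
        obtain ⟨B, hB, B', hB', hnc1, hnc2⟩ := h4
        refine ⟨{Sum.inr B, Sum.inr B'}, ?_, ?_, ?_⟩
        · intro w hw
          rcases Finset.mem_insert.1 hw with rfl | hw
          · exact (Finset.mem_toRight).1 hB
          · rw [Finset.mem_singleton.1 hw]
            exact (Finset.mem_toRight).1 hB'
        · exact le_trans (Finset.card_insert_le _ _)
            (by simpa using Nat.add_le_add_right hl 1)
        · intro hcf
          obtain ⟨_, _, _, h4⟩ := hcf
          have hBm : B ∈ ({Sum.inr B, Sum.inr B'} : Finset (V ⊕ Finset V)).toRight := by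
            simp [Finset.mem_toRight]
          have hBm' : B' ∈ ({Sum.inr B, Sum.inr B'} : Finset (V ⊕ Finset V)).toRight := by
            simp [Finset.mem_toRight]
          rcases h4 B hBm B' hBm' with h | h
          · exact hnc1 h
          · exact hnc2 h
      · -- some B fails to contain toLeft
        push_neg at h3
        obtain ⟨B, hB, hnsub⟩ := h3
        obtain ⟨v, hv, hvB⟩ := Finset.not_subset.1 hnsub
        refine ⟨{Sum.inl v, Sum.inr B}, ?_, ?_, ?_⟩
        · intro w hw
          rcases Finset.mem_insert.1 hw with rfl | hw
          · exact (Finset.mem_toLeft).1 hv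
          · rw [Finset.mem_singleton.1 hw]
            exact (Finset.mem_toRight).1 hB
        · exact le_trans (Finset.card_insert_le _ _)
            (by simpa using Nat.add_le_add_right hl 1)
        · intro hcf
          obtain ⟨_, _, hc3, _⟩ := hcf
          have hBm : B ∈ ({Sum.inl v, Sum.inr B} : Finset (V ⊕ Finset V)).toRight := by
            simp [Finset.mem_toRight]
          have hsub := (hc3 B hBm).2.2
          have hvm : v ∈ ({Sum.inl v, Sum.inr B} : Finset (V ⊕ Finset V)).toLeft := by
            simp [Finset.mem_toLeft]
          exact hvB (hsub hvm)
    · -- toLeft not a face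
      refine ⟨N.toLeft.image (Sum.inl : V → V ⊕ Finset V), ?_, ?_, ?_⟩
      · intro w hw
        obtain ⟨v, hv, rfl⟩ := Finset.mem_image.1 hw
        exact (Finset.mem_toLeft).1 hv
      · calc (N.toLeft.image (Sum.inl : V → V ⊕ Finset V)).card ≤ N.toLeft.card := Finset.card_image_le
          _ ≤ l := hcard
          _ ≤ l + 1 := Nat.le_succ l
      · intro hcf
        have heq : (N.toLeft.image (Sum.inl : V → V ⊕ Finset V)).toLeft = N.toLeft := by
          ext a; simp [Finset.mem_toLeft]
        exact hface (heq ▸ hcf.1)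
  · -- toLeft too big
    push_neg at hcard
    obtain ⟨G, hGsub, hGcard⟩ := Finset.exists_subset_card_eq hcard
    refine ⟨G.image (Sum.inl : V → V ⊕ Finset V), ?_, ?_, ?_⟩
    · intro w hw
      obtain ⟨v, hv, rfl⟩ := Finset.mem_image.1 hw
      exact (Finset.mem_toLeft).1 (hGsub hv)
    · exact le_trans Finset.card_image_le (le_of_eq hGcard)
    · intro hcf
      have heq : (G.image (Sum.inl : V → V ⊕ Finset V)).toLeft = G := by
        ext a; simp [Finset.mem_toLeft]
      have hle : G.card ≤ l := heq ▸ hcf.2.1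
      omega

open MvPolynomial in
/-- The Stanley–Reisner ideal of `sd^l(Δ)` (generated by the squarefree
monomials supported on non-faces whose elements are vertices of `sd^l(Δ)`) is
generated by squarefree monomials of degree at most `l + 1`. -/
theorem stanley_reisner_sdl_degrees {V : Type*} [DecidableEq V]
    (k : Type*) [Field k] (d l : ℕ) (Δ : Finset (Finset V))
    (hclosed : ∀ F ∈ Δ, ∀ G ⊆ F, G ∈ Δ) (hdim : ∀ F ∈ Δ, F.card ≤ d)
    (hl : 1 ≤ l) (hld : l ≤ d - 1) :
    Ideal.span {m : MvPolynomial (V ⊕ Finset V) k |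
        ∃ N : Finset (V ⊕ Finset V), (∀ w ∈ N, IsChainFace Δ l {w}) ∧
          ¬ IsChainFace Δ l N ∧ m = ∏ w ∈ N, X w} =
      Ideal.span {m : MvPolynomial (V ⊕ Finset V) k |
        ∃ N : Finset (V ⊕ Finset V), (∀ w ∈ N, IsChainFace Δ l {w}) ∧
          ¬ IsChainFace Δ l N ∧ N.card ≤ l + 1 ∧ m = ∏ w ∈ N, X w} := by
  apply le_antisymm
  · rw [Ideal.span_le]
    rintro m ⟨N, hsing, hN, rfl⟩
    obtain ⟨N', hsub, hcard, hN'⟩ := exists_small_nonface Δ l hl N hsing hN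
    have hprod : ∏ w ∈ N, X (R := k) w =
        (∏ w ∈ N \ N', X w) * ∏ w ∈ N', X w := (Finset.prod_sdiff hsub).symm
    rw [hprod]
    exact Ideal.mul_mem_left _ _ (Ideal.subset_span
      ⟨N', fun w hw => hsing w (hsub hw), hN', hcard, rfl⟩)
  · rw [Ideal.span_le]
    rintro m ⟨N, hsing, hN, _, rfl⟩
    exact Ideal.subset_span ⟨N, hsing, hN, rfl⟩
end

section
/- If Δ is a (d-1)-dimensional simplicial complex with h_i^Δ ≥ 0 for all 0 ≤ i ≤ d, then h_i^Δ ≤ h_i^{sd^l(Δ)} for all 0 ≤ i ≤ d, where h^{sd^l(Δ)}_j = Σ_{μ=0}^{d} A(d+1, j, d+1-μ, l) h_μ^Δ. Equivalently (purely about the matrix): the matrix with entries A(d+1, i, d+1-j, l) has h_{00} = h_{dd} = 1, h_{0j} = 0 for j ≠ 0, h_{dj} = 0 for j ≠ d, diagonal entries ≥ 1 for 1 ≤ i ≤ d-1, and all entries in rows 1 through d-1 strictly positive. -/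
def skipf (v x : ℕ) : ℕ := if x < v then x else x + 1

def rhof (d l t r p : ℕ) : ℕ :=
  if p < t then d - 1 - p
  else if p < l then l - 1 - p
  else if p < l + r then (l - t) + r - 1 - (p - l)
  else (l - t) + (p - l)

def sigf (d l t r v p : ℕ) : ℕ := if p < d then skipf v (rhof d l t r p) else v

lemma rho_lt {d l t r : ℕ} (ht : t ≤ l) (hr2 : r ≤ d - l) (hld : l + 1 ≤ d)
    (p : ℕ) (hp : p < d) : rhof d l t r p < d := by
  unfold rhof; split_ifs <;> omega

lemma rho_inj {d l t r : ℕ} (ht : t ≤ l) (hr1 : 1 ≤ r) (hr2 : r ≤ d - l) (hld : l + 1 ≤ d)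
    {p q : ℕ} (hp : p < d) (hq : q < d)
    (h : rhof d l t r p = rhof d l t r q) : p = q := by
  unfold rhof at h; split_ifs at h <;> omega

lemma sig_le {d l t r v : ℕ} (ht : t ≤ l) (hr2 : r ≤ d - l) (hld : l + 1 ≤ d) (hv : v ≤ d)
    (p : ℕ) : sigf d l t r v p ≤ d := by
  unfold sigf skipf
  split_ifs with h1 h2
  · omega
  · have := rho_lt ht hr2 hld p h1; omega
  · omega

lemma sig_inj {d l t r v : ℕ} (ht : t ≤ l) (hr1 : 1 ≤ r) (hr2 : r ≤ d - l) (hld : l + 1 ≤ d)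
    {p q : ℕ} (hp : p ≤ d) (hq : q ≤ d)
    (h : sigf d l t r v p = sigf d l t r v q) : p = q := by
  unfold sigf skipf at h
  split_ifs at h with h1 h2 h3 h4 h5 h6 h7 <;>
    first
      | omega
      | exact rho_inj ht hr1 hr2 hld (by omega) (by omega) (by omega)

/-- the constructed permutation -/
noncomputable def thePerm (d l t r v : ℕ) (ht : t ≤ l) (hr1 : 1 ≤ r) (hr2 : r ≤ d - l)
    (hld : l + 1 ≤ d) (hv : v ≤ d) : Equiv.Perm (Fin (d + 1)) :=
  Equiv.ofBijective
    (fun p => ⟨sigf d l t r v p.val, by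
      have := sig_le ht hr2 hld hv p.val; omega⟩)
    (Finite.injective_iff_bijective.mp (fun p q h => by
      apply Fin.ext
      exact sig_inj ht hr1 hr2 hld (by omega) (by omega) (by
        have := congrArg Fin.val h; simpa using this)))

lemma pv_thePerm (d l t r v : ℕ) (ht : t ≤ l) (hr1 : 1 ≤ r) (hr2 : r ≤ d - l)
    (hld : l + 1 ≤ d) (hv : v ≤ d) (m : ℕ) (hm : m ≤ d) :
    pv (d + 1) (thePerm d l t r v ht hr1 hr2 hld hv) m = sigf d l t r v m + 1 := by
  unfold pv thePerm
  rw [dif_pos (by omega)]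
  simp [Equiv.ofBijective_apply]

lemma skip_lt_skip {v a b : ℕ} : skipf v a < skipf v b ↔ a < b := by
  unfold skipf; split_ifs <;> omega

lemma lt_skip {v a : ℕ} : v < skipf v a ↔ v ≤ a := by
  unfold skipf; split_ifs <;> omega

section
variable {d l t r v : ℕ} (ht : t ≤ l) (hr1 : 1 ≤ r) (hr2 : r ≤ d - l)
  (hl : 1 ≤ l) (hld : l + 1 ≤ d) (hv : v ≤ d)

lemma thePerm_mem_SdSet :
    thePerm d l t r v ht hr1 hr2 hld hv ∈ SdSet (d + 1) l := by
  intro s s' hss' hs'l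
  have h1 : (s : ℕ) < d := by omega
  have h2 : (s' : ℕ) < d := by omega
  show (thePerm d l t r v ht hr1 hr2 hld hv s' : ℕ) < _
  unfold thePerm
  simp only [Equiv.ofBijective_apply]
  unfold sigf
  rw [if_pos h1, if_pos h2, skip_lt_skip]
  have hss : (s : ℕ) < (s' : ℕ) := hss'
  unfold rhof
  split_ifs <;> omega

lemma thePerm_desc_iff (m : ℕ) (hm : m < d) :
    ((m < l ∧ pv (d+1) (thePerm d l t r v ht hr1 hr2 hld hv) l
        < pv (d+1) (thePerm d l t r v ht hr1 hr2 hld hv) m) ∨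
      (l ≤ m ∧ pv (d+1) (thePerm d l t r v ht hr1 hr2 hld hv) (m + 1)
        < pv (d+1) (thePerm d l t r v ht hr1 hr2 hld hv) m))
    ↔ (m < t ∨ (l ≤ m ∧ m + 2 ≤ l + r) ∨ (m = d - 1 ∧ v ≤ rhof d l t r (d-1))) := by
  rw [pv_thePerm d l t r v ht hr1 hr2 hld hv l (by omega),
    pv_thePerm d l t r v ht hr1 hr2 hld hv m (by omega),
    pv_thePerm d l t r v ht hr1 hr2 hld hv (m+1) (by omega)]
  rcases lt_or_ge m l with hml | hml
  · have hne : ¬ (l ≤ m) := by omega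
    have hmd : ¬ (m = d - 1) := by omega
    simp only [hne, false_and, or_false, hmd, hml, true_and]
    unfold sigf
    rw [if_pos (show l < d by omega), if_pos (show m < d by omega), Nat.add_lt_add_iff_right,
      skip_lt_skip]
    unfold rhof
    split_ifs <;> omega
  · have hne : ¬ (m < l) := by omega
    simp only [hne, false_and, false_or, hml, true_and]
    rcases lt_or_ge (m+1) d with hm1 | hm1
    · have hmd : ¬ (m = d - 1) := by omega
      simp only [hmd, false_and, or_false]
      unfold sigf
      rw [if_pos (show m+1 < d by omega), if_pos (show m < d by omega),
        Nat.add_lt_add_iff_right, skip_lt_skip]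
      unfold rhof
      split_ifs <;> omega
    · have hmd : m = d - 1 := by omega
      subst hmd
      unfold sigf
      rw [if_neg (show ¬ (d - 1 + 1 < d) by omega), if_pos (show d - 1 < d by omega),
        Nat.add_lt_add_iff_right, lt_skip]
      have h1 : ¬ (d - 1 < t) := by omega
      have h2 : ¬ (d - 1 + 2 ≤ l + r) := by omega
      simp only [h1, h2, false_and, false_or, true_and, eq_self_iff_true]

lemma thePerm_lDesc :
    lDesc (d+1) l (thePerm d l t r v ht hr1 hr2 hld hv)
      = (Finset.range t ∪ Finset.Ico l (l + r - 1))
        ∪ (if v ≤ rhof d l t r (d-1) then {d-1} else (∅ : Finset ℕ)) := by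
  ext m
  unfold lDesc
  rw [Finset.mem_filter]
  by_cases hmd : m < d
  · rw [thePerm_desc_iff ht hr1 hr2 hld hv m hmd]
    simp only [Finset.mem_range, Finset.mem_union, Finset.mem_Ico]
    split_ifs with hfin
    · simp only [Finset.mem_singleton]
      constructor
      · rintro ⟨_, h | ⟨h1, h2⟩ | ⟨h1, _⟩⟩ <;> omega
      · rintro ((h | ⟨h1, h2⟩) | h)
        · exact ⟨by omega, Or.inl h⟩
        · exact ⟨by omega, Or.inr (Or.inl ⟨h1, by omega⟩)⟩
        · exact ⟨by omega, Or.inr (Or.inr ⟨by omega, hfin⟩)⟩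
    · simp only [Finset.notMem_empty, or_false]
      constructor
      · rintro ⟨_, h | ⟨h1, h2⟩ | ⟨h1, h2⟩⟩
        · exact Or.inl h
        · exact Or.inr ⟨h1, by omega⟩
        · exact absurd h2 hfin
      · rintro (h | ⟨h1, h2⟩)
        · exact ⟨by omega, Or.inl h⟩
        · exact ⟨by omega, Or.inr (Or.inl ⟨h1, by omega⟩)⟩
  · have h1 : ¬ (m ∈ Finset.range (d + 1 - 1)) := by
      simp only [Finset.mem_range]; omega
    simp only [Finset.mem_range, Finset.mem_union, Finset.mem_Ico]
    constructor
    · rintro ⟨h, _⟩; exact absurd (by simpa using h) (by omega)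
    · intro h
      exfalso
      split_ifs at h with hfin
      · simp only [Finset.mem_singleton] at h
        rcases h with (h | ⟨h1, h2⟩) | h <;> omega
      · simp only [Finset.notMem_empty, or_false] at h
        rcases h with h | ⟨h1, h2⟩ <;> omega

lemma thePerm_card_lDesc :
    (lDesc (d+1) l (thePerm d l t r v ht hr1 hr2 hld hv)).card
      = t + (r - 1) + (if v ≤ rhof d l t r (d-1) then 1 else 0) := by
  rw [thePerm_lDesc ht hr1 hr2 hld hv]
  rw [Finset.card_union_of_disjoint, Finset.card_union_of_disjoint]
  · rw [Finset.card_range, Nat.card_Ico]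
    have h1 : l + r - 1 - l = r - 1 := by omega
    rw [h1]
    congr 1
    split_ifs <;> simp
  · rw [Finset.disjoint_left]
    intro a ha
    simp only [Finset.mem_range, Finset.mem_Ico] at ha ⊢
    omega
  · rw [Finset.disjoint_left]
    intro a ha hb
    simp only [Finset.mem_union, Finset.mem_range, Finset.mem_Ico] at ha
    split_ifs at hb
    · simp only [Finset.mem_singleton] at hb
      omega
    · simp at hb

lemma thePerm_last :
    pv (d+1) (thePerm d l t r v ht hr1 hr2 hld hv) (d + 1 - 1) = v + 1 := by
  have : d + 1 - 1 = d := by omega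
  rw [this, pv_thePerm d l t r v ht hr1 hr2 hld hv d (le_refl d)]
  unfold sigf
  rw [if_neg (by omega)]

end

lemma choice_lemma (d l i j : ℕ) (hl : 1 ≤ l) (hld : l + 1 ≤ d)
    (hi1 : 1 ≤ i) (hi2 : i ≤ d - 1) (hj : j ≤ d) :
    ∃ t r, t ≤ l ∧ 1 ≤ r ∧ r ≤ d - l ∧
      i = t + (r - 1) + (if d - j ≤ rhof d l t r (d - 1) then 1 else 0) := by
  by_cases hc1 : i + 1 ≤ d - l ∧ 1 ≤ j
  · exact ⟨0, i, by omega, by omega, by omega, by unfold rhof; split_ifs <;> omega⟩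
  by_cases hc2 : j = 0
  · exact ⟨i + 1 - (d - l), i + 1 - (i + 1 - (d - l)), by omega, by omega, by omega,
      by unfold rhof; split_ifs <;> omega⟩
  by_cases hc3 : i ≤ j
  · exact ⟨i - (d - l), d - l, by omega, by omega, by omega,
      by unfold rhof; split_ifs <;> omega⟩
  by_cases hc4 : l + 1 = d
  · exact ⟨i, 1, by omega, by omega, by omega, by unfold rhof; split_ifs <;> omega⟩
  by_cases hc5 : l < j
  · exact ⟨i + 1 - (d - l), d - l - 1, by omega, by omega, by omega,
      by unfold rhof; split_ifs <;> omega⟩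
  by_cases hc6 : i ≤ d - 2
  · refine ⟨if i + 2 - (d - l) ≤ j then j else i + 2 - (d - l),
      i + 1 - (if i + 2 - (d - l) ≤ j then j else i + 2 - (d - l)), ?_, ?_, ?_, ?_⟩
    · split_ifs <;> omega
    · split_ifs <;> omega
    · split_ifs <;> omega
    · unfold rhof; split_ifs <;> omega
  · exact ⟨l, d - l, by omega, by omega, by omega,
      by unfold rhof; split_ifs <;> omega⟩

lemma Acard_pos (d l i j : ℕ) (hl : 1 ≤ l) (hld : l + 1 ≤ d)
    (hi1 : 1 ≤ i) (hi2 : i ≤ d - 1) (hj : j ≤ d) :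
    0 < Acard (d + 1) i (d + 1 - j) l := by
  obtain ⟨t, r, ht, hr1, hr2, hi⟩ := choice_lemma d l i j hl hld hi1 hi2 hj
  have hv : d - j ≤ d := by omega
  unfold Acard
  have : Nonempty {σ : Equiv.Perm (Fin (d + 1)) //
      σ ∈ SdSet (d + 1) l ∧ (lDesc (d + 1) l σ).card = i ∧
        pv (d + 1) σ (d + 1 - 1) = d + 1 - j} := by
    refine ⟨thePerm d l t r (d - j) ht hr1 hr2 hld hv, ?_, ?_, ?_⟩
    · exact thePerm_mem_SdSet ht hr1 hr2 hld hv
    · rw [thePerm_card_lDesc ht hr1 hr2 hld hv]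
      omega
    · rw [thePerm_last ht hr1 hr2 hld hv]
      omega
  exact Nat.card_pos

lemma chain_up (f : ℕ → ℕ) (a b : ℕ) (h : ∀ m, a ≤ m → m < b → f m < f (m + 1)) :
    ∀ q p, a ≤ p → p ≤ q → q ≤ b → f p + (q - p) ≤ f q := by
  intro q
  induction q with
  | zero => intro p h1 h2 _; have hp : p = 0 := (by omega); (simp only [hp]); omega
  | succ n ih =>
    intro p h1 h2 h3
    rcases Nat.eq_or_lt_of_le h2 with he | hlt
    · simp only [he]; omega
    · have := ih p h1 (by omega) (by omega)
      have := h n (by omega) (by omega)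
      omega

lemma chain_down (f : ℕ → ℕ) (a b : ℕ) (h : ∀ m, a ≤ m → m < b → f (m + 1) < f m) :
    ∀ q p, a ≤ p → p ≤ q → q ≤ b → f q + (q - p) ≤ f p := by
  intro q
  induction q with
  | zero => intro p h1 h2 _; have hp : p = 0 := (by omega); (simp only [hp]); omega
  | succ n ih =>
    intro p h1 h2 h3
    rcases Nat.eq_or_lt_of_le h2 with he | hlt
    · simp only [he]; omega
    · have := ih p h1 (by omega) (by omega)
      have := h n (by omega) (by omega)
      omega

section
variable {d l : ℕ} {σ : Equiv.Perm (Fin (d + 1))}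

lemma pv_bounds (m : ℕ) (hm : m ≤ d) : 1 ≤ pv (d + 1) σ m ∧ pv (d + 1) σ m ≤ d + 1 := by
  unfold pv
  rw [dif_pos (by omega)]
  have := (σ ⟨m, by omega⟩).isLt
  omega

lemma pv_inj {m m' : ℕ} (hm : m ≤ d) (hm' : m' ≤ d)
    (h : pv (d + 1) σ m = pv (d + 1) σ m') : m = m' := by
  have e1 : pv (d + 1) σ m = (σ ⟨m, by omega⟩ : ℕ) + 1 := by
    unfold pv; rw [dif_pos (show m < d + 1 by omega)]
  have e2 : pv (d + 1) σ m' = (σ ⟨m', by omega⟩ : ℕ) + 1 := by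
    unfold pv; rw [dif_pos (show m' < d + 1 by omega)]
  rw [e1, e2] at h
  have h2 : σ ⟨m, by omega⟩ = σ ⟨m', by omega⟩ := Fin.ext (by omega)
  have h3 := congrArg Fin.val (σ.injective h2)
  simpa using h3

lemma zero_desc_pv (hl : 1 ≤ l) (hld : l + 1 ≤ d) (hs : σ ∈ SdSet (d + 1) l)
    (hc : (lDesc (d + 1) l σ).card = 0) :
    ∀ m, m ≤ d → pv (d + 1) σ m = if m < l then l - m else m + 1 := by
  have hempty : lDesc (d + 1) l σ = ∅ := Finset.card_eq_zero.mp hc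
  have hnd : ∀ m, m < d → ¬ ((m < l ∧ pv (d+1) σ l < pv (d+1) σ m) ∨
      (l ≤ m ∧ pv (d+1) σ (m + 1) < pv (d+1) σ m)) := by
    intro m hm hp
    have : m ∈ lDesc (d + 1) l σ := by
      unfold lDesc
      rw [Finset.mem_filter]
      exact ⟨by simp; omega, hp⟩
    rw [hempty] at this
    simp at this
  have hup : ∀ m, l ≤ m → m < d → pv (d+1) σ m < pv (d+1) σ (m+1) := by
    intro m h1 h2
    have h3 := hnd m h2
    have h4 : ¬ (pv (d+1) σ (m+1) < pv (d+1) σ m) := fun hcon => h3 (Or.inr ⟨h1, hcon⟩)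
    have h5 : pv (d+1) σ m ≠ pv (d+1) σ (m+1) := fun hcon => by
      have := pv_inj (σ := σ) (by omega) (by omega) hcon; omega
    omega
  have hdn : ∀ m, m + 1 < l → pv (d+1) σ (m+1) < pv (d+1) σ m := by
    intro m h1
    have := hs ⟨m, by omega⟩ ⟨m+1, by omega⟩ (by simp [Fin.lt_iff_val_lt_val]) (by simpa)
    unfold pv
    rw [dif_pos (by omega), dif_pos (by omega)]
    simpa using this
  have hblock : ∀ m, m < l → pv (d+1) σ m < pv (d+1) σ l := by
    intro m h1
    have h3 := hnd m (by omega)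
    have h4 : ¬ (pv (d+1) σ l < pv (d+1) σ m) := fun hcon => h3 (Or.inl ⟨h1, hcon⟩)
    have h5 : pv (d+1) σ m ≠ pv (d+1) σ l := fun hcon => by
      have := pv_inj (σ := σ) (by omega) (by omega) hcon; omega
    omega
  have c1 := chain_up (pv (d+1) σ) l d hup d l (le_refl l) (by omega) (le_refl d)
  have c2 := chain_down (pv (d+1) σ) 0 (l-1) (fun m _ hm => hdn m (by omega)) (l-1) 0
    (by omega) (by omega) (le_refl _)
  have h0l := hblock 0 (by omega)
  have hb1 := (pv_bounds (σ := σ) (l-1) (by omega)).1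
  have hbd := (pv_bounds (σ := σ) d (by omega)).2
  -- key equalities
  have hFl : pv (d+1) σ l = l + 1 := by omega
  intro m hm
  rcases lt_or_ge m l with hml | hml
  · rw [if_pos hml]
    have d1 := chain_down (pv (d+1) σ) 0 (l-1) (fun m' _ hm' => hdn m' (by omega)) (l-1) m
      (by omega) (by omega) (le_refl _)
    have d2 := chain_down (pv (d+1) σ) 0 (l-1) (fun m' _ hm' => hdn m' (by omega)) m 0
      (by omega) (by omega) (by omega)
    have := hblock m hml
    omega
  · rw [if_neg (by omega)]
    have u1 := chain_up (pv (d+1) σ) l d hup m l (le_refl l) hml (by omega)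
    have u2 := chain_up (pv (d+1) σ) l d hup d m hml (by omega) (le_refl d)
    omega

lemma full_desc_pv (hl : 1 ≤ l) (hld : l + 1 ≤ d) (hs : σ ∈ SdSet (d + 1) l)
    (hc : (lDesc (d + 1) l σ).card = d) :
    ∀ m, m ≤ d → pv (d + 1) σ m = d + 1 - m := by
  have hfull : lDesc (d + 1) l σ = Finset.range d := by
    apply Finset.eq_of_subset_of_card_le
    · intro x hx
      unfold lDesc at hx
      rw [Finset.mem_filter] at hx
      simpa using hx.1
    · rw [Finset.card_range, hc]
  have hd : ∀ m, m < d → ((m < l ∧ pv (d+1) σ l < pv (d+1) σ m) ∨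
      (l ≤ m ∧ pv (d+1) σ (m + 1) < pv (d+1) σ m)) := by
    intro m hm
    have : m ∈ lDesc (d + 1) l σ := by rw [hfull]; simpa
    unfold lDesc at this
    rw [Finset.mem_filter] at this
    exact this.2
  have hdn : ∀ m, m < d → pv (d+1) σ (m+1) < pv (d+1) σ m := by
    intro m hm
    rcases lt_or_ge (m+1) l with h1 | h1
    · have := hs ⟨m, by omega⟩ ⟨m+1, by omega⟩ (by simp [Fin.lt_iff_val_lt_val]) (by simpa)
      unfold pv
      rw [dif_pos (by omega), dif_pos (by omega)]
      simpa using this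
    · rcases lt_or_ge m l with h2 | h2
      · have h3 : m + 1 = l := by omega
        rcases hd m hm with ⟨_, h4⟩ | ⟨h4, _⟩
        · rw [h3]; exact h4
        · omega
      · rcases hd m hm with ⟨h4, _⟩ | ⟨_, h4⟩
        · omega
        · exact h4
  intro m hm
  have c1 := chain_down (pv (d+1) σ) 0 d (fun m' _ hm' => hdn m' hm') d m
    (by omega) hm (le_refl d)
  have c2 := chain_down (pv (d+1) σ) 0 d (fun m' _ hm' => hdn m' hm') m 0
    (by omega) (by omega) hm
  have hb1 := (pv_bounds (σ := σ) d (by omega)).1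
  have hb0 := (pv_bounds (σ := σ) 0 (by omega)).2
  omega

end

lemma pv_apply {d : ℕ} (σ : Equiv.Perm (Fin (d + 1))) (p : Fin (d + 1)) :
    pv (d + 1) σ p.val = (σ p : ℕ) + 1 := by
  unfold pv
  rw [dif_pos p.isLt]

lemma Acard_row0_diag {d l : ℕ} (hl : 1 ≤ l) (hld : l + 1 ≤ d) :
    Acard (d + 1) 0 (d + 1) l = 1 := by
  unfold Acard
  rw [Nat.card_eq_one_iff_unique]
  constructor
  · constructor
    rintro ⟨σ, hσ1, hσ2, _⟩ ⟨τ, hτ1, hτ2, _⟩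
    apply Subtype.ext
    show σ = τ
    apply Equiv.ext
    intro p
    have e1 := zero_desc_pv hl hld hσ1 hσ2 p.val (by omega)
    have e2 := zero_desc_pv hl hld hτ1 hτ2 p.val (by omega)
    rw [pv_apply] at e1 e2
    apply Fin.ext
    split_ifs at e1 e2 <;> omega
  · refine ⟨⟨thePerm d l 0 1 d (by omega) (le_refl 1) (by omega) hld (le_refl d),
      thePerm_mem_SdSet _ _ _ _ _, ?_, ?_⟩⟩
    · rw [thePerm_card_lDesc]
      have := rho_lt (d := d) (l := l) (t := 0) (r := 1) (by omega) (by omega) hld (d-1) (by omega)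
      rw [if_neg (by omega)]
    · rw [thePerm_last]

lemma Acard_rowd_diag {d l : ℕ} (hl : 1 ≤ l) (hld : l + 1 ≤ d) :
    Acard (d + 1) d 1 l = 1 := by
  unfold Acard
  rw [Nat.card_eq_one_iff_unique]
  constructor
  · constructor
    rintro ⟨σ, hσ1, hσ2, _⟩ ⟨τ, hτ1, hτ2, _⟩
    apply Subtype.ext
    show σ = τ
    apply Equiv.ext
    intro p
    have e1 := full_desc_pv hl hld hσ1 hσ2 p.val (by omega)
    have e2 := full_desc_pv hl hld hτ1 hτ2 p.val (by omega)
    rw [pv_apply] at e1 e2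
    apply Fin.ext
    omega
  · refine ⟨⟨thePerm d l l (d - l) 0 (le_refl l) (by omega) (le_refl (d-l)) hld (by omega),
      thePerm_mem_SdSet _ _ _ _ _, ?_, ?_⟩⟩
    · rw [thePerm_card_lDesc]
      rw [if_pos (Nat.zero_le _)]
      omega
    · rw [thePerm_last]

lemma Acard_row0_off {d l j : ℕ} (hl : 1 ≤ l) (hld : l + 1 ≤ d) (hj : j ≤ d) (hj0 : j ≠ 0) :
    Acard (d + 1) 0 (d + 1 - j) l = 0 := by
  unfold Acard
  haveI : IsEmpty {σ : Equiv.Perm (Fin (d + 1)) //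
      σ ∈ SdSet (d + 1) l ∧ (lDesc (d + 1) l σ).card = 0 ∧
        pv (d + 1) σ (d + 1 - 1) = d + 1 - j} := by
    constructor
    rintro ⟨σ, h1, h2, h3⟩
    have hd1 : d + 1 - 1 = d := by omega
    rw [hd1] at h3
    have := zero_desc_pv hl hld h1 h2 d (le_refl d)
    rw [if_neg (by omega)] at this
    omega
  exact Nat.card_of_isEmpty

lemma Acard_rowd_off {d l j : ℕ} (hl : 1 ≤ l) (hld : l + 1 ≤ d) (hj : j ≤ d) (hjd : j ≠ d) :
    Acard (d + 1) d (d + 1 - j) l = 0 := by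
  unfold Acard
  haveI : IsEmpty {σ : Equiv.Perm (Fin (d + 1)) //
      σ ∈ SdSet (d + 1) l ∧ (lDesc (d + 1) l σ).card = d ∧
        pv (d + 1) σ (d + 1 - 1) = d + 1 - j} := by
    constructor
    rintro ⟨σ, h1, h2, h3⟩
    have hd1 : d + 1 - 1 = d := by omega
    rw [hd1] at h3
    have := full_desc_pv hl hld h1 h2 d (le_refl d)
    omega
  exact Nat.card_of_isEmpty

/-- If `h_μ ≥ 0` for all `0 ≤ μ ≤ d` then
`h_i ≤ Σ_μ A(d+1, i, d+1-μ, l) h_μ` for all `0 ≤ i ≤ d`; equivalently, purely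
about the matrix with `(i,j)`-entry `A(d+1, i, d+1-j, l)`: the `(0,0)`- and
`(d,d)`-entries are `1`, the remaining entries of rows `0` and `d` vanish, the
diagonal entries for `1 ≤ i ≤ d-1` are `≥ 1`, and all entries in rows `1`
through `d-1` are strictly positive. -/
theorem hvector_monotone (d l : ℕ) (hl : 1 ≤ l) (hld : l ≤ d - 1) :
    (∀ h : ℕ → ℤ, (∀ μ, μ ≤ d → 0 ≤ h μ) → ∀ i, i ≤ d →
        h i ≤ ∑ μ ∈ Finset.range (d + 1),
          (Acard (d + 1) i (d + 1 - μ) l : ℤ) * h μ) ∧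
      Acard (d + 1) 0 (d + 1) l = 1 ∧
      Acard (d + 1) d 1 l = 1 ∧
      (∀ j, j ≤ d → j ≠ 0 → Acard (d + 1) 0 (d + 1 - j) l = 0) ∧
      (∀ j, j ≤ d → j ≠ d → Acard (d + 1) d (d + 1 - j) l = 0) ∧
      (∀ i, 1 ≤ i → i ≤ d - 1 → 1 ≤ Acard (d + 1) i (d + 1 - i) l) ∧
      (∀ i j, 1 ≤ i → i ≤ d - 1 → j ≤ d →
        0 < Acard (d + 1) i (d + 1 - j) l) := by
  have hld' : l + 1 ≤ d := by omega
  have hd2 : 2 ≤ d := by omega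
  refine ⟨?_, Acard_row0_diag hl hld', Acard_rowd_diag hl hld',
    fun j hj hj0 => Acard_row0_off hl hld' hj hj0,
    fun j hj hjd => Acard_rowd_off hl hld' hj hjd,
    fun i hi1 hi2 => Acard_pos d l i i hl hld' hi1 hi2 (by omega),
    fun i j hi1 hi2 hj => Acard_pos d l i j hl hld' hi1 hi2 hj⟩
  intro h hh i hi
  by_cases hi0 : i = 0
  · subst hi0
    have hsum : ∑ μ ∈ Finset.range (d + 1), (Acard (d + 1) 0 (d + 1 - μ) l : ℤ) * h μ
        = h 0 := by
      rw [Finset.sum_eq_single 0]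
      · rw [Nat.sub_zero, Acard_row0_diag hl hld']
        ring
      · intro b hb hb0
        rw [Acard_row0_off hl hld' (by simp only [Finset.mem_range] at hb; omega) hb0]
        simp
      · intro h0
        exact absurd (Finset.mem_range.mpr (by omega)) h0
    rw [hsum]
  by_cases hid : i = d
  · rw [hid]
    have hsum : ∑ μ ∈ Finset.range (d + 1), (Acard (d + 1) d (d + 1 - μ) l : ℤ) * h μ
        = h d := by
      rw [Finset.sum_eq_single d]
      · have : d + 1 - d = 1 := by omega
        rw [this, Acard_rowd_diag hl hld']
        ring
      · intro b hb hbd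
        rw [Acard_rowd_off hl hld' (by simp only [Finset.mem_range] at hb; omega) hbd]
        simp
      · intro h0
        exact absurd (Finset.mem_range.mpr (by omega)) h0
    rw [hsum]
  · have hpos : 0 < Acard (d + 1) i (d + 1 - i) l :=
      Acard_pos d l i i hl hld' (by omega) (by omega) (by omega)
    have h1 : (1 : ℤ) ≤ (Acard (d + 1) i (d + 1 - i) l : ℤ) := by exact_mod_cast hpos
    have h2 : h i ≤ (Acard (d + 1) i (d + 1 - i) l : ℤ) * h i :=
      le_mul_of_one_le_left (hh i hi) h1
    have hmem : i ∈ Finset.range (d + 1) := Finset.mem_range.mpr (by omega)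
    refine h2.trans (Finset.single_le_sum
      (f := fun μ => (Acard (d + 1) i (d + 1 - μ) l : ℤ) * h μ) (fun μ hμ => ?_) hmem)
    exact mul_nonneg (Nat.cast_nonneg _)
      (hh μ (by simp only [Finset.mem_range] at hμ; omega))
end
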